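/- arXiv:2009.05845 — 5 statements merged into one kernel-verified Lean document; each statement's English description precedes it below -/
import Mathlib

section
/- Let L : ℝⁿ × ℝᵐ → ℝ be three times continuously differentiable, let (x̄, p̄) satisfy ∇ₓL(x̄, p̄) = 0 with M := ∇²ₓₓL(x̄, p̄) positive definite, and let x* : U → ℝⁿ be the continuously differentiable solution map on a neighborhood U of p̄ with x*(p̄) = x̄ and ∇ₓL(x*(p), p) = 0 on U. Define the tangential predictor x̃(p) := x̄ − M⁻¹N(p − p̄), where N := ∇²ₓₚL(x̄, p̄). Then there exist L_x > 0 and a neighborhood V ⊆ U of p̄ such that ‖x̃(p) − x*(p)‖ ≤ L_x‖p − p̄‖² for all p ∈ V. -/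
/-!
Write `G(x, p)` for the gradient of `L(·, p)` at `x`. It is `C²` and vanishes at `(x̄, p̄)` and
along the solution curve `p ↦ (x*(p), p)`, so its second-order Taylor expansion at `(x̄, p̄)` gives
`M (x*(p) - x̄) + N (p - p̄) = O(‖(x*(p), p) - (x̄, p̄)‖²)`. As `x*` is differentiable at `p̄`,
that norm is `O(‖p - p̄‖)`, and applying `M⁻¹` turns the left side into `x*(p) - x̃(p)`.
-/

open Asymptotics Filter Metric Topology

section Taylor

variable {X Y : Type*} [NormedAddCommGroup X] [NormedSpace ℝ X]
  [NormedAddCommGroup Y] [NormedSpace ℝ Y]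

theorem ContDiffAt.isBigO_sub_sub_fderiv_sq {G : X → Y} {z₀ : X} (hG : ContDiffAt ℝ 2 G z₀) :
    (fun z => G z - G z₀ - fderiv ℝ G z₀ (z - z₀)) =O[𝓝 z₀] fun z => ‖z - z₀‖ ^ 2 := by
  obtain ⟨K, t, ht, hlip⟩ := (hG.fderiv_right (m := 1) le_rfl).exists_lipschitzOnWith
  have hdiff : ∀ᶠ y in 𝓝 z₀, DifferentiableAt ℝ G y :=
    (hG.eventually (by simp)).mono fun y hy => hy.differentiableAt (by norm_num)
  obtain ⟨r, hr, hball⟩ := Metric.mem_nhds_iff.mp (inter_mem ht hdiff)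
  refine IsBigO.of_bound K ?_
  filter_upwards [ball_mem_nhds z₀ hr] with z hz
  set δ := ‖z - z₀‖
  have hsub : closedBall z₀ δ ⊆ t ∩ {y | DifferentiableAt ℝ G y} :=
    (closedBall_subset_ball (mem_ball_iff_norm.mp hz)).trans hball
  have hbound : ∀ y ∈ closedBall z₀ δ, ‖fderiv ℝ G y - fderiv ℝ G z₀‖ ≤ K * δ := fun y hy =>
    hlip.norm_sub_le_of_le (hsub hy).1 (mem_of_mem_nhds ht) (mem_closedBall_iff_norm.mp hy)
  have hMVT := (convex_closedBall z₀ δ).norm_image_sub_le_of_norm_fderiv_le'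
    (fun y hy => (hsub hy).2) hbound (mem_closedBall_self (norm_nonneg _))
    (mem_closedBall_iff_norm.mpr le_rfl)
  simpa [sq, mul_assoc] using hMVT

end Taylor

section TangentialPredictor

variable {E F E' : Type*} [NormedAddCommGroup E] [NormedSpace ℝ E]
  [NormedAddCommGroup F] [NormedSpace ℝ F] [NormedAddCommGroup E'] [NormedSpace ℝ E']

theorem isBigO_tangentialPredictor_sub_sq {G : E × F → E'} {x₀ : E} {p₀ : F} {xs : F → E}
    {Minv : E' →L[ℝ] E} (hG : ContDiffAt ℝ 2 G (x₀, p₀)) (hG₀ : G (x₀, p₀) = 0)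
    (hxs : DifferentiableAt ℝ xs p₀) (hfix : xs p₀ = x₀)
    (hzero : ∀ᶠ p in 𝓝 p₀, G (xs p, p) = 0)
    (hMinv : ∀ v, Minv ((fderiv ℝ G (x₀, p₀)).comp (.inl ℝ E F) v) = v) :
    (fun p => x₀ - Minv ((fderiv ℝ G (x₀, p₀)).comp (.inr ℝ E F) (p - p₀)) - xs p)
      =O[𝓝 p₀] fun p => ‖p - p₀‖ ^ 2 := by
  have hz : (fun p => (xs p, p) - (x₀, p₀)) =O[𝓝 p₀] fun p => p - p₀ := by
    simp only [Prod.mk_sub_mk]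
    exact .prod_left (by simpa [hfix] using hxs.hasFDerivAt.isBigO_sub) (isBigO_refl _ _)
  have hz_tendsto : Tendsto (fun p => (xs p, p)) (𝓝 p₀) (𝓝 (x₀, p₀)) := by
    simpa [hfix] using (hxs.continuousAt.prodMk continuousAt_id).tendsto
  have hTaylor := (hG.isBigO_sub_sub_fderiv_sq.comp_tendsto hz_tendsto).trans (hz.norm_norm.pow 2)
  refine ((Minv.isBigO_comp _ _).trans hTaylor).congr' ?_ EventuallyEq.rfl
  filter_upwards [hzero] with p hp
  have hsplit : (xs p, p) - (x₀, p₀) =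
      ContinuousLinearMap.inl ℝ E F (xs p - x₀) + ContinuousLinearMap.inr ℝ E F (p - p₀) := by
    simp
  have hM : Minv (fderiv ℝ G (x₀, p₀) (ContinuousLinearMap.inl ℝ E F (xs p - x₀))) = xs p - x₀ :=
    hMinv _
  simp only [Function.comp_apply, hp, hG₀, hsplit, map_add, zero_sub, sub_zero, map_neg, hM,
    ContinuousLinearMap.comp_apply]
  abel

end TangentialPredictor

section PartialGradient

variable {E F : Type*} [NormedAddCommGroup E] [InnerProductSpace ℝ E] [CompleteSpace E]
  [NormedAddCommGroup F] [NormedSpace ℝ F]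

noncomputable def partialGradientFst (L : E × F → ℝ) (z : E × F) : E :=
  (InnerProductSpace.toDual ℝ E).symm ((fderiv ℝ L z).comp (.inl ℝ E F))

theorem gradient_eq_partialGradientFst {L : E × F → ℝ} {x : E} {p : F}
    (hL : DifferentiableAt ℝ L (x, p)) :
    gradient (fun x => L (x, p)) x = partialGradientFst L (x, p) := by
  rw [gradient, partialGradientFst]
  exact congrArg _ (hL.hasFDerivAt.comp x (hasFDerivAt_prodMk_left x p)).fderiv

theorem ContDiff.partialGradientFst {L : E × F → ℝ} {k l : WithTop ℕ∞} (hL : ContDiff ℝ k L)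
    (hlk : l + 1 ≤ k) : ContDiff ℝ l (partialGradientFst L) :=
  (LinearIsometryEquiv.contDiff _).comp ((hL.fderiv_right hlk).clm_comp contDiff_const)

variable {L : E × F → ℝ} {x : E} {p : F}

theorem fderiv_gradient_fst_eq (hL : Differentiable ℝ L)
    (hG : DifferentiableAt ℝ (partialGradientFst L) (x, p)) :
    fderiv ℝ (gradient fun x => L (x, p)) x
      = (fderiv ℝ (partialGradientFst L) (x, p)).comp (.inl ℝ E F) := by
  have : (gradient fun x => L (x, p)) = fun x => partialGradientFst L (x, p) :=
    funext fun x => gradient_eq_partialGradientFst (hL _)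
  rw [this]
  exact (hG.hasFDerivAt.comp x (hasFDerivAt_prodMk_left (𝕜 := ℝ) x p)).fderiv

theorem fderiv_gradient_snd_eq (hL : Differentiable ℝ L)
    (hG : DifferentiableAt ℝ (partialGradientFst L) (x, p)) :
    fderiv ℝ (fun p => gradient (fun x => L (x, p)) x) p
      = (fderiv ℝ (partialGradientFst L) (x, p)).comp (.inr ℝ E F) := by
  have : (fun p => gradient (fun x => L (x, p)) x) = fun p => partialGradientFst L (x, p) :=
    funext fun p => gradient_eq_partialGradientFst (hL _)
  rw [this]
  exact (hG.hasFDerivAt.comp p (hasFDerivAt_prodMk_right (𝕜 := ℝ) x p)).fderiv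

end PartialGradient

theorem tangential_predictor_quadratic_error_general {n m : ℕ}
    (L : EuclideanSpace ℝ (Fin n) × EuclideanSpace ℝ (Fin m) → ℝ)
    (xbar : EuclideanSpace ℝ (Fin n)) (pbar : EuclideanSpace ℝ (Fin m))
    (hL : ContDiff ℝ 3 L)
    (hgrad : gradient (fun x => L (x, pbar)) xbar = 0)
    (U : Set (EuclideanSpace ℝ (Fin m))) (hU : U ∈ nhds pbar)
    (xs : EuclideanSpace ℝ (Fin m) → EuclideanSpace ℝ (Fin n))
    (hxs : ContDiffOn ℝ 1 xs U) (hfix : xs pbar = xbar)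
    (hstat : ∀ p ∈ U, gradient (fun x => L (x, p)) (xs p) = 0)
    (Minv : EuclideanSpace ℝ (Fin n) →L[ℝ] EuclideanSpace ℝ (Fin n))
    (hMinv_left : ∀ v, Minv ((fderiv ℝ (gradient fun x => L (x, pbar)) xbar) v) = v) :
    ∃ Lx > (0:ℝ), ∃ V ∈ nhds pbar, V ⊆ U ∧
      ∀ p ∈ V,
        ‖(xbar - Minv ((fderiv ℝ (fun p' => gradient (fun x => L (x, p')) xbar) pbar)
            (p - pbar))) - xs p‖ ≤ Lx * ‖p - pbar‖ ^ 2 := by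
  have hLd : Differentiable ℝ L := hL.differentiable (by norm_num)
  have hG : ContDiff ℝ 2 (partialGradientFst L) := hL.partialGradientFst (by norm_num)
  have hGd := (hG.differentiable (by norm_num)) (xbar, pbar)
  rw [fderiv_gradient_fst_eq hLd hGd] at hMinv_left
  rw [fderiv_gradient_snd_eq hLd hGd]
  have hO := isBigO_tangentialPredictor_sub_sq hG.contDiffAt
    (gradient_eq_partialGradientFst (hLd _) ▸ hgrad)
    ((hxs.contDiffAt hU).differentiableAt one_ne_zero) hfix
    (eventually_of_mem hU fun p hp => gradient_eq_partialGradientFst (hLd _) ▸ hstat p hp)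
    hMinv_left
  obtain ⟨c, hc, hcO⟩ := hO.exists_pos
  refine ⟨c, hc, U ∩ {p | _}, inter_mem hU hcO.bound, Set.inter_subset_left, fun p hp => ?_⟩
  simpa using hp.2

/-- The tangential predictor `x̃(p) = x̄ − M⁻¹N(p − p̄)` approximates the
parametric optimal solution with error quadratic in the parameter perturbation. Here
`M = ∇²ₓₓL(x̄,p̄)`, `N = ∇²ₓₚL(x̄,p̄)`, and `Minv` is the inverse of `M` (which exists
since `M` is positive definite). -/
theorem tangential_predictor_quadratic_error {n m : ℕ}
    (L : EuclideanSpace ℝ (Fin n) × EuclideanSpace ℝ (Fin m) → ℝ)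
    (xbar : EuclideanSpace ℝ (Fin n)) (pbar : EuclideanSpace ℝ (Fin m))
    (hL : ContDiff ℝ 3 L)
    (hgrad : gradient (fun x => L (x, pbar)) xbar = 0)
    (hhess : ∀ d : EuclideanSpace ℝ (Fin n), d ≠ 0 →
      0 < iteratedFDeriv ℝ 2 (fun x => L (x, pbar)) xbar ![d, d])
    (U : Set (EuclideanSpace ℝ (Fin m))) (hU : U ∈ nhds pbar)
    (xs : EuclideanSpace ℝ (Fin m) → EuclideanSpace ℝ (Fin n))
    (hxs : ContDiffOn ℝ 1 xs U) (hfix : xs pbar = xbar)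
    (hstat : ∀ p ∈ U, gradient (fun x => L (x, p)) (xs p) = 0)
    (Minv : EuclideanSpace ℝ (Fin n) →L[ℝ] EuclideanSpace ℝ (Fin n))
    (hMinv_left : ∀ v, Minv ((fderiv ℝ (gradient fun x => L (x, pbar)) xbar) v) = v)
    (hMinv_right : ∀ v, (fderiv ℝ (gradient fun x => L (x, pbar)) xbar) (Minv v) = v) :
    ∃ Lx > (0:ℝ), ∃ V ∈ nhds pbar, V ⊆ U ∧
      ∀ p ∈ V,
        ‖(xbar - Minv ((fderiv ℝ (fun p' => gradient (fun x => L (x, p')) xbar) pbar)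
            (p - pbar))) - xs p‖ ≤ Lx * ‖p - pbar‖ ^ 2 :=
  tangential_predictor_quadratic_error_general L xbar pbar hL hgrad U hU xs hxs hfix hstat Minv
    hMinv_left
end

section
/- Let J : ℝⁿ → ℝ be differentiable with L-Lipschitz gradient, i.e. ‖∇J(a) − ∇J(b)‖ ≤ L‖a − b‖ for all a, b ∈ ℝⁿ, and let D ≥ 0. Suppose x, x⁺, λ, λ⁺ ∈ ℝⁿ satisfy the approximate stationarity conditions ‖∇J(x) + λ‖ ≤ D and ‖∇J(x⁺) + λ⁺‖ ≤ D. Then ‖λ⁺ − λ‖² ≤ 2L²‖x⁺ − x‖² + 8D². -/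
open RealInnerProductSpace

/-- paper's Lemma 1: bound on the change of the dual variable from
approximate stationarity of consecutive iterates. -/
theorem dual_change_bound {n : ℕ}
    (J : EuclideanSpace ℝ (Fin n) → ℝ) (hJ : Differentiable ℝ J)
    (L : ℝ) (hLip : ∀ a b : EuclideanSpace ℝ (Fin n),
      ‖gradient J a - gradient J b‖ ≤ L * ‖a - b‖)
    (D : ℝ) (hD : 0 ≤ D)
    (x xplus lam lamplus : EuclideanSpace ℝ (Fin n))
    (h1 : ‖gradient J x + lam‖ ≤ D)
    (h2 : ‖gradient J xplus + lamplus‖ ≤ D) :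
    ‖lamplus - lam‖ ^ 2 ≤ 2 * L ^ 2 * ‖xplus - x‖ ^ 2 + 8 * D ^ 2 := by
  have hlin : ‖lamplus - lam‖ ≤ L * ‖xplus - x‖ + 2 * D := by
    have hdecomp : lamplus - lam =
        (gradient J xplus + lamplus) - (gradient J x + lam)
          - (gradient J xplus - gradient J x) := by abel
    calc ‖lamplus - lam‖
        = ‖(gradient J xplus + lamplus) - (gradient J x + lam)
            - (gradient J xplus - gradient J x)‖ := by rw [← hdecomp]
      _ ≤ ‖(gradient J xplus + lamplus) - (gradient J x + lam)‖
            + ‖gradient J xplus - gradient J x‖ := norm_sub_le _ _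
      _ ≤ (‖gradient J xplus + lamplus‖ + ‖gradient J x + lam‖)
            + L * ‖xplus - x‖ := by
          gcongr
          exacts [norm_sub_le _ _, hLip _ _]
      _ ≤ L * ‖xplus - x‖ + 2 * D := by linarith
  have h0 : (0:ℝ) ≤ ‖lamplus - lam‖ := norm_nonneg _
  have h0' : (0:ℝ) ≤ ‖xplus - x‖ := norm_nonneg _
  nlinarith [sq_nonneg (L * ‖xplus - x‖ - 2 * D), sq_nonneg (L * ‖xplus - x‖ + 2 * D)]
end

section
/- Let N ≥ 1, ρ > 0, D ≥ 0, and for each i = 1,…,N let Jᵢ : ℝⁿ → ℝ be differentiable with Lᵢ-Lipschitz gradient, and let x̃ᵢ, x̃ᵢ⁺, λᵢ, x₀⁺ ∈ ℝⁿ satisfy ‖∇Jᵢ(x̃ᵢ) + λᵢ‖ ≤ D and ‖∇Jᵢ(x̃ᵢ⁺) + λᵢ + ρ(x̃ᵢ⁺ − x₀⁺)‖ ≤ D, and define λᵢ⁺ := λᵢ + ρ(x̃ᵢ⁺ − x₀⁺). Then Σᵢ₌₁ᴺ ⟨λᵢ⁺ − λᵢ, x̃ᵢ⁺ − x₀⁺⟩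 = Σᵢ₌₁ᴺ (1/ρ)‖λᵢ⁺ − λᵢ‖² ≤ Σᵢ₌₁ᴺ (2Lᵢ²/ρ)‖x̃ᵢ⁺ − x̃ᵢ‖² + 8ND²/ρ. In particular, for the augmented Lagrangian L({xᵢ}, x₀, {λᵢ}) = h(x₀) + Σᵢ Jᵢ(xᵢ) + Σᵢ ⟨λᵢ, xᵢ − x₀⟩ + Σᵢ (ρ/2)‖xᵢ − x₀‖² (for any h : ℝⁿ → ℝ), one has L({x̃ᵢ⁺}, x₀⁺, {λᵢ⁺}) − L({x̃ᵢ⁺}, x₀⁺, {λᵢ}) ≤ Σᵢ₌₁ᴺ (2Lᵢ²/ρ)‖x̃ᵢ⁺ − x̃ᵢ‖² + 8ND²/ρ. -/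
open RealInnerProductSpace Finset

/-!
The dual step `λᵢ⁺ − λᵢ = ρ (x̃ᵢ⁺ − x₀⁺)` is the difference of the two stationarity residuals
`∇Jᵢ(x̃ᵢ⁺) + λᵢ + ρ(x̃ᵢ⁺ − x₀⁺)` and `∇Jᵢ(x̃ᵢ) + λᵢ`, corrected by `∇Jᵢ(x̃ᵢ⁺) − ∇Jᵢ(x̃ᵢ)`.
Both residuals have norm at most `D` and the gradient difference at most `Lᵢ‖x̃ᵢ⁺ − x̃ᵢ‖`, so
`‖λᵢ⁺ − λᵢ‖ ≤ Lᵢ‖x̃ᵢ⁺ − x̃ᵢ‖ + 2D`, and `(a + b)² ≤ 2a² + 2b²` gives the bound. The augmented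
Lagrangian depends on the multipliers only through the linear term, so its increase is
`Σᵢ ⟨λᵢ⁺ − λᵢ, x̃ᵢ⁺ − x₀⁺⟩ = Σᵢ (1/ρ)‖λᵢ⁺ − λᵢ‖²`.
-/

/-- The augmented Lagrangian
`L({xᵢ}, x₀, {λᵢ}) = h(x₀) + Σᵢ Jᵢ(xᵢ) + Σᵢ ⟨λᵢ, xᵢ − x₀⟩ + Σᵢ (ρ/2)‖xᵢ − x₀‖²`. -/
noncomputable def augLag {n N : ℕ} (h : EuclideanSpace ℝ (Fin n) → ℝ)
    (J : Fin N → EuclideanSpace ℝ (Fin n) → ℝ) (ρ : ℝ)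
    (x : Fin N → EuclideanSpace ℝ (Fin n)) (x0 : EuclideanSpace ℝ (Fin n))
    (lam : Fin N → EuclideanSpace ℝ (Fin n)) : ℝ :=
  h x0 + (∑ i, J i (x i)) + (∑ i, ⟪lam i, x i - x0⟫) + ∑ i, ρ / 2 * ‖x i - x0‖ ^ 2

theorem real_inner_smul_left_self_eq {E : Type*} [SeminormedAddCommGroup E]
    [InnerProductSpace ℝ E] {ρ : ℝ} (hρ : 0 < ρ) (v : E) :
    ⟪ρ • v, v⟫ = 1 / ρ * ‖ρ • v‖ ^ 2 := by
  rw [real_inner_smul_left, real_inner_self_eq_norm_sq, norm_smul, Real.norm_of_nonneg hρ.le]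
  field_simp

theorem norm_sq_le_of_residuals {E : Type*} [SeminormedAddCommGroup E] {g g' l r : E}
    {L d D : ℝ} (hg : ‖g' - g‖ ≤ L * d) (h1 : ‖g + l‖ ≤ D) (h2 : ‖g' + l + r‖ ≤ D) :
    ‖r‖ ^ 2 ≤ 2 * L ^ 2 * d ^ 2 + 8 * D ^ 2 := by
  have hr : ‖r‖ ≤ L * d + 2 * D :=
    calc ‖r‖ = ‖(g' + l + r) - (g + l) - (g' - g)‖ := by congr 1; abel
      _ ≤ ‖g' + l + r‖ + ‖g + l‖ + ‖g' - g‖ := norm_sub_le_of_le (norm_sub_le _ _) le_rfl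
      _ ≤ L * d + 2 * D := by linarith
  nlinarith [norm_nonneg r, sq_nonneg (L * d - 2 * D)]

theorem augLag_sub_augLag_eq_sum_inner {n N : ℕ} (h : EuclideanSpace ℝ (Fin n) → ℝ)
    (J : Fin N → EuclideanSpace ℝ (Fin n) → ℝ) (ρ : ℝ)
    (x : Fin N → EuclideanSpace ℝ (Fin n)) (x0 : EuclideanSpace ℝ (Fin n))
    (lam' lam : Fin N → EuclideanSpace ℝ (Fin n)) :
    augLag h J ρ x x0 lam' - augLag h J ρ x x0 lam = ∑ i, ⟪lam' i - lam i, x i - x0⟫ := by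
  simp only [augLag, inner_sub_left, Finset.sum_sub_distrib]
  ring

theorem dual_update_increase_bound_general {n N : ℕ} (ρ : ℝ) (hρ : 0 < ρ)
    (D : ℝ)
    (h : EuclideanSpace ℝ (Fin n) → ℝ)
    (J : Fin N → EuclideanSpace ℝ (Fin n) → ℝ)
    (Li : Fin N → ℝ)
    (hLip : ∀ i, ∀ a b : EuclideanSpace ℝ (Fin n),
      ‖gradient (J i) a - gradient (J i) b‖ ≤ Li i * ‖a - b‖)
    (x xp lam : Fin N → EuclideanSpace ℝ (Fin n))
    (x0p : EuclideanSpace ℝ (Fin n))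
    (h1 : ∀ i, ‖gradient (J i) (x i) + lam i‖ ≤ D)
    (h2 : ∀ i, ‖gradient (J i) (xp i) + lam i + ρ • (xp i - x0p)‖ ≤ D)
    (lamp : Fin N → EuclideanSpace ℝ (Fin n))
    (hlamp : ∀ i, lamp i = lam i + ρ • (xp i - x0p)) :
    ((∑ i, ⟪lamp i - lam i, xp i - x0p⟫) = ∑ i, (1 / ρ) * ‖lamp i - lam i‖ ^ 2) ∧
    ((∑ i, (1 / ρ) * ‖lamp i - lam i‖ ^ 2) ≤
      (∑ i, (2 * (Li i) ^ 2 / ρ) * ‖xp i - x i‖ ^ 2) + 8 * N * D ^ 2 / ρ) ∧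
    (augLag h J ρ xp x0p lamp - augLag h J ρ xp x0p lam ≤
      (∑ i, (2 * (Li i) ^ 2 / ρ) * ‖xp i - x i‖ ^ 2) + 8 * N * D ^ 2 / ρ) := by
  have hstep (i : Fin N) : lamp i - lam i = ρ • (xp i - x0p) := by
    rw [hlamp i, add_sub_cancel_left]
  have hid : (∑ i, ⟪lamp i - lam i, xp i - x0p⟫) = ∑ i, (1 / ρ) * ‖lamp i - lam i‖ ^ 2 :=
    sum_congr rfl fun i _ => by rw [hstep i, real_inner_smul_left_self_eq hρ]
  have hbound : (∑ i, (1 / ρ) * ‖lamp i - lam i‖ ^ 2) ≤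
      (∑ i, (2 * (Li i) ^ 2 / ρ) * ‖xp i - x i‖ ^ 2) + 8 * N * D ^ 2 / ρ :=
    calc (∑ i, (1 / ρ) * ‖lamp i - lam i‖ ^ 2)
        ≤ ∑ i, (1 / ρ) * (2 * Li i ^ 2 * ‖xp i - x i‖ ^ 2 + 8 * D ^ 2) := by
          gcongr with i
          rw [hstep i]
          exact norm_sq_le_of_residuals (hLip i _ _) (h1 i) (h2 i)
      _ = (∑ i, (2 * (Li i) ^ 2 / ρ) * ‖xp i - x i‖ ^ 2) + 8 * N * D ^ 2 / ρ := by
          simp only [mul_add, sum_add_distrib, Fin.sum_const, nsmul_eq_mul]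
          congr 1
          · exact sum_congr rfl fun i _ => by ring
          · ring
  exact ⟨hid, hbound, by rw [augLag_sub_augLag_eq_sum_inner, hid]; exact hbound⟩

/-- estimate (19) in the proof of the paper's Lemma 2: bound on the
increase of the augmented Lagrangian caused by the dual update. -/
theorem dual_update_increase_bound {n N : ℕ} (hN : 1 ≤ N) (ρ : ℝ) (hρ : 0 < ρ)
    (D : ℝ) (hD : 0 ≤ D)
    (h : EuclideanSpace ℝ (Fin n) → ℝ)
    (J : Fin N → EuclideanSpace ℝ (Fin n) → ℝ)
    (hJ : ∀ i, Differentiable ℝ (J i))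
    (Li : Fin N → ℝ)
    (hLip : ∀ i, ∀ a b : EuclideanSpace ℝ (Fin n),
      ‖gradient (J i) a - gradient (J i) b‖ ≤ Li i * ‖a - b‖)
    (x xp lam : Fin N → EuclideanSpace ℝ (Fin n))
    (x0p : EuclideanSpace ℝ (Fin n))
    (h1 : ∀ i, ‖gradient (J i) (x i) + lam i‖ ≤ D)
    (h2 : ∀ i, ‖gradient (J i) (xp i) + lam i + ρ • (xp i - x0p)‖ ≤ D)
    (lamp : Fin N → EuclideanSpace ℝ (Fin n))
    (hlamp : ∀ i, lamp i = lam i + ρ • (xp i - x0p)) :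
    ((∑ i, ⟪lamp i - lam i, xp i - x0p⟫) = ∑ i, (1 / ρ) * ‖lamp i - lam i‖ ^ 2) ∧
    ((∑ i, (1 / ρ) * ‖lamp i - lam i‖ ^ 2) ≤
      (∑ i, (2 * (Li i) ^ 2 / ρ) * ‖xp i - x i‖ ^ 2) + 8 * N * D ^ 2 / ρ) ∧
    (augLag h J ρ xp x0p lamp - augLag h J ρ xp x0p lam ≤
      (∑ i, (2 * (Li i) ^ 2 / ρ) * ‖xp i - x i‖ ^ 2) + 8 * N * D ^ 2 / ρ) :=
  dual_update_increase_bound_general ρ hρ D h J Li hLip x xp lam x0p h1 h2 lamp hlamp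
end

section
/- Let N ≥ 1, ρ > 0, D ≥ 0, let h : ℝⁿ → ℝ be convex, and for each i = 1,…,N let Jᵢ : ℝⁿ → ℝ be differentiable with Lᵢ-Lipschitz gradient. Let x̃ᵢ, x̃ᵢ⁺, λᵢ, x₀, x₀⁺ ∈ ℝⁿ and γᵢ > 0 satisfy: (a) x₀⁺ is a global minimizer of the map x ↦ L({x̃ᵢ}, x, {λᵢ}); (b) for each i, the map x ↦ Jᵢ(x) + ⟨λᵢ, x − x₀⁺⟩ + (ρ/2)‖x − x₀⁺‖² is γᵢ-strongly convex; (c) ‖∇Jᵢ(x̃ᵢ) + λᵢ‖ ≤ D and ‖∇Jᵢ(x̃ᵢ⁺) + λᵢ + ρ(x̃ᵢ⁺ − x₀⁺)‖ ≤ D for each i; and define λᵢ⁺ := λᵢ + ρ(x̃ᵢ⁺ − x₀⁺). Then L({x̃ᵢ⁺}, x₀⁺, {λᵢ⁺}) − L({x̃ᵢ}, x₀, {λᵢ}) ≤ Σᵢ₌₁ᴺ (2Lᵢ²/ρ − γᵢ/4)‖x̃ᵢ⁺ − x̃ᵢ‖² − (Nρ/2)‖x₀⁺ − x₀‖² + 8ND²/ρ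 + Σᵢ₌₁ᴺ D²/γᵢ. -/
/-!
The step in `x₀` loses at least `(Nρ/2)‖x₀⁺ − x₀‖²`, because `L` is `Nρ`-strongly convex in `x₀`
and `x₀⁺` is its minimizer. The step in the blocks and multipliers is bounded block by block:
strong convexity of the local objective `Φᵢ` together with `‖∇Φᵢ(x̃ᵢ⁺)‖ ≤ D` bounds
`Φᵢ(x̃ᵢ⁺) − Φᵢ(x̃ᵢ)` by `D²/γᵢ − (γᵢ/4)‖x̃ᵢ⁺ − x̃ᵢ‖²`, while the multiplier update contributes
`ρ‖x̃ᵢ⁺ − x₀⁺‖²`, and `ρ(x̃ᵢ⁺ − x₀⁺)` is the difference of the two stationarity residuals and of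
two gradients of `Jᵢ`, hence has norm at most `2D + Lᵢ‖x̃ᵢ⁺ − x̃ᵢ‖`.
-/

open RealInnerProductSpace Finset

open Filter Topology

section StrongConvexity

variable {E : Type*} [NormedAddCommGroup E] [InnerProductSpace ℝ E] {s : Set E} {m n : ℝ}
  {f g : E → ℝ}

lemma StrongConvexOn.add (hf : StrongConvexOn s m f) (hg : StrongConvexOn s n g) :
    StrongConvexOn s (m + n) (f + g) := by
  have hmod : (fun r : ℝ => (m + n) / 2 * r ^ 2) =
      (fun r => m / 2 * r ^ 2) + fun r => n / 2 * r ^ 2 := by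
    ext r
    simp only [Pi.add_apply]
    ring
  unfold StrongConvexOn
  rw [hmod]
  exact UniformConvexOn.add hf hg

lemma StrongConvexOn.sum {ι : Type*} {t : Finset ι} {m : ι → ℝ} {f : ι → E → ℝ}
    (hs : Convex ℝ s) (hf : ∀ i ∈ t, StrongConvexOn s (m i) (f i)) :
    StrongConvexOn s (∑ i ∈ t, m i) (fun x => ∑ i ∈ t, f i x) := by
  classical
  induction t using Finset.induction_on with
  | empty => simpa using convexOn_const (0 : ℝ) hs
  | insert i t hi ih =>
    simp only [sum_insert hi]
    exact (hf i (mem_insert_self i t)).add (ih fun j hj => hf j (mem_insert_of_mem hj))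

lemma norm_smul_add_smul_sq {a b : ℝ} (hab : a + b = 1) (u v : E) :
    ‖a • u + b • v‖ ^ 2 = a * ‖u‖ ^ 2 + b * ‖v‖ ^ 2 - a * b * ‖u - v‖ ^ 2 := by
  obtain rfl : b = 1 - a := by linarith
  rw [norm_add_sq_real, norm_sub_sq_real, norm_smul, norm_smul, real_inner_smul_left,
    real_inner_smul_right, mul_pow, mul_pow, Real.norm_eq_abs, Real.norm_eq_abs, sq_abs, sq_abs]
  ring

lemma strongConvexOn_univ_inner_add_sq_norm (ρ : ℝ) (l p : E) :
    StrongConvexOn Set.univ ρ (fun y => ⟪l, p - y⟫ + ρ / 2 * ‖p - y‖ ^ 2) := by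
  refine ⟨convex_univ, fun x _ y _ a b _ _ hab => le_of_eq ?_⟩
  have hp : p - (a • x + b • y) = a • (p - x) + b • (p - y) := by
    obtain rfl : b = 1 - a := by linarith
    module
  simp only [smul_eq_mul]
  rw [hp, inner_add_right, real_inner_smul_right, real_inner_smul_right,
    norm_smul_add_smul_sq hab, sub_sub_sub_cancel_left, norm_sub_rev y x]
  ring

lemma StrongConvexOn.add_sq_norm_sub_le_of_isMinOn {x y : E} (hf : StrongConvexOn s m f)
    (hx : x ∈ s) (hy : y ∈ s) (hmin : IsMinOn f s x) :
    f x + m / 2 * ‖x - y‖ ^ 2 ≤ f y := by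
  have hseg : ∀ t ∈ Set.Ioo (0 : ℝ) 1, f x + (1 - t) * (m / 2 * ‖x - y‖ ^ 2) ≤ f y := by
    rintro t ⟨ht0, ht1⟩
    have hmid := hmin (hf.1 hx hy (sub_nonneg.2 ht1.le) ht0.le (sub_add_cancel 1 t))
    have hconv := hf.2 hx hy (sub_nonneg.2 ht1.le) ht0.le (sub_add_cancel 1 t)
    simp only [smul_eq_mul, Set.mem_ofPred_eq] at hmid hconv
    have hscaled : t * (f x + (1 - t) * (m / 2 * ‖x - y‖ ^ 2)) ≤ t * f y := by linarith
    exact le_of_mul_le_mul_left hscaled ht0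
  have hlim : Tendsto (fun t : ℝ => f x + (1 - t) * (m / 2 * ‖x - y‖ ^ 2)) (𝓝[>] 0)
      (𝓝 (f x + m / 2 * ‖x - y‖ ^ 2)) := by
    have hcont : Continuous fun t : ℝ => f x + (1 - t) * (m / 2 * ‖x - y‖ ^ 2) := by fun_prop
    simpa using (hcont.tendsto 0).mono_left nhdsWithin_le_nhds
  exact le_of_tendsto hlim (eventually_of_mem (Ioo_mem_nhdsGT one_pos) hseg)

end StrongConvexity

section LocalStep

variable {E : Type*} [NormedAddCommGroup E] [InnerProductSpace ℝ E]

lemma inner_le_sq_div_add_mul_sq {g v : E} {γ D : ℝ} (hγ : 0 < γ) (hg : ‖g‖ ≤ D) :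
    ⟪g, v⟫ ≤ D ^ 2 / γ + γ / 4 * ‖v‖ ^ 2 := by
  have hcs : ⟪g, v⟫ ≤ D * ‖v‖ :=
    (real_inner_le_norm g v).trans (mul_le_mul_of_nonneg_right hg (norm_nonneg v))
  have hsq : (D - γ / 2 * ‖v‖) ^ 2 / γ = D ^ 2 / γ - D * ‖v‖ + γ / 4 * ‖v‖ ^ 2 := by
    field_simp
    ring
  linarith [div_nonneg (sq_nonneg (D - γ / 2 * ‖v‖)) hγ.le]

lemma mul_sq_norm_sub_le_of_residuals {g : E → E} {a b c x : E} {ρ L D : ℝ} (hρ : 0 < ρ)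
    (hLip : ‖g a - g x‖ ≤ L * ‖a - x‖) (hx : ‖g x + c‖ ≤ D)
    (ha : ‖g a + c + ρ • (a - b)‖ ≤ D) :
    ρ * ‖a - b‖ ^ 2 ≤ 2 * L ^ 2 / ρ * ‖a - x‖ ^ 2 + 8 * D ^ 2 / ρ := by
  have hnorm : ρ * ‖a - b‖ ≤ 2 * D + L * ‖a - x‖ := by
    calc ρ * ‖a - b‖ = ‖(g a + c + ρ • (a - b)) - (g x + c) - (g a - g x)‖ := by
          rw [← norm_smul_of_nonneg hρ.le]
          congr 1
          abel
      _ ≤ ‖g a + c + ρ • (a - b)‖ + ‖g x + c‖ + ‖g a - g x‖ :=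
        (norm_sub_le _ _).trans (add_le_add_left (norm_sub_le _ _) _)
      _ ≤ 2 * D + L * ‖a - x‖ := by linarith
  have hsq : (ρ * ‖a - b‖) ^ 2 ≤ 8 * D ^ 2 + 2 * L ^ 2 * ‖a - x‖ ^ 2 := by
    nlinarith [pow_le_pow_left₀ (by positivity) hnorm 2, sq_nonneg (2 * D - L * ‖a - x‖)]
  calc ρ * ‖a - b‖ ^ 2 = (ρ * ‖a - b‖) ^ 2 / ρ := by field_simp
    _ ≤ (8 * D ^ 2 + 2 * L ^ 2 * ‖a - x‖ ^ 2) / ρ := by gcongr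
    _ = 2 * L ^ 2 / ρ * ‖a - x‖ ^ 2 + 8 * D ^ 2 / ρ := by ring

/-- The objective `Φᵢ` of the `i`-th block subproblem, with multiplier `lam` and centre `b = x₀⁺`. -/
noncomputable def localObjective (J : E → ℝ) (ρ : ℝ) (lam b z : E) : ℝ :=
  J z + ⟪lam, z - b⟫ + ρ / 2 * ‖z - b‖ ^ 2

variable [CompleteSpace E]

lemma hasGradientAt_localObjective {J : E → ℝ} {a : E} (hJ : DifferentiableAt ℝ J a)
    (ρ : ℝ) (lam b : E) :
    HasGradientAt (localObjective J ρ lam b) (gradient J a + lam + ρ • (a - b)) a := by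
  have hb : HasFDerivAt (fun z : E => z - b) (ContinuousLinearMap.id ℝ E) a :=
    (hasFDerivAt_id a).sub_const b
  rw [hasGradientAt_iff_hasFDerivAt]
  refine ((hJ.hasGradientAt.hasFDerivAt.add ((innerSL ℝ lam).hasFDerivAt.comp a hb)).add
    (hb.norm_sq.const_mul (ρ / 2))).congr_fderiv ?_
  ext v
  simp only [toDual_gradient, ContinuousLinearMap.comp_id, map_add, map_sub, map_smul,
    add_apply, smul_apply, sub_apply, coe_innerSL_apply, InnerProductSpace.toDual_apply_apply, nsmul_eq_mul, smul_eq_mul]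
  ring

lemma localObjective_step_le {J : E → ℝ} {lam b x xp : E} {ρ L γ D : ℝ}
    (hJ : DifferentiableAt ℝ J xp) (hρ : 0 < ρ) (hγ : 0 < γ)
    (hLip : ‖gradient J xp - gradient J x‖ ≤ L * ‖xp - x‖)
    (hsc : localObjective J ρ lam b xp - localObjective J ρ lam b x ≤
      ⟪gradient (localObjective J ρ lam b) xp, xp - x⟫ - γ / 2 * ‖xp - x‖ ^ 2)
    (hx : ‖gradient J x + lam‖ ≤ D) (hxp : ‖gradient J xp + lam + ρ • (xp - b)‖ ≤ D) :
    localObjective J ρ lam b xp + ρ * ‖xp - b‖ ^ 2 - localObjective J ρ lam b x ≤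
      (2 * L ^ 2 / ρ - γ / 4) * ‖xp - x‖ ^ 2 + (8 * D ^ 2 / ρ + D ^ 2 / γ) := by
  rw [(hasGradientAt_localObjective hJ ρ lam b).gradient] at hsc
  have hprimal := inner_le_sq_div_add_mul_sq (v := xp - x) hγ hxp
  have hdual := mul_sq_norm_sub_le_of_residuals hρ hLip hx hxp
  linarith

end LocalStep

section AugmentedLagrangian

variable {n N : ℕ} {h : EuclideanSpace ℝ (Fin n) → ℝ} {J : Fin N → EuclideanSpace ℝ (Fin n) → ℝ}
  {ρ : ℝ} {x lam : Fin N → EuclideanSpace ℝ (Fin n)}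

lemma strongConvexOn_augLag (hconv : ConvexOn ℝ Set.univ h) :
    StrongConvexOn Set.univ (N * ρ) (fun y => augLag h J ρ x y lam) := by
  have hpen := StrongConvexOn.sum convex_univ (t := univ)
    fun i _ => strongConvexOn_univ_inner_add_sq_norm ρ (lam i) (x i)
  rw [sum_const, card_univ, Fintype.card_fin, nsmul_eq_mul] at hpen
  have hsum := (strongConvexOn_zero.2 (hconv.add_const (∑ i, J i (x i)))).add hpen
  rw [zero_add] at hsum
  have hsplit : (fun y => augLag h J ρ x y lam) = (h + fun _ => ∑ i, J i (x i)) +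
      fun y => ∑ i, (⟪lam i, x i - y⟫ + ρ / 2 * ‖x i - y‖ ^ 2) := by
    funext y
    simp only [augLag, Pi.add_apply, sum_add_distrib]
    ring
  rw [hsplit]
  exact hsum

lemma augLag_update_sub {xp lamp : Fin N → EuclideanSpace ℝ (Fin n)} {b : EuclideanSpace ℝ (Fin n)}
    (hlamp : ∀ i, lamp i = lam i + ρ • (xp i - b)) :
    augLag h J ρ xp b lamp - augLag h J ρ x b lam =
      ∑ i, (localObjective (J i) ρ (lam i) b (xp i) + ρ * ‖xp i - b‖ ^ 2 -
        localObjective (J i) ρ (lam i) b (x i)) := by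
  simp only [augLag, localObjective, hlamp, inner_add_left, real_inner_smul_left,
    real_inner_self_eq_norm_sq, sum_add_distrib, sum_sub_distrib]
  ring

end AugmentedLagrangian

theorem augmented_lagrangian_descent_general {n N : ℕ} (ρ : ℝ) (hρ : 0 < ρ) (D : ℝ)
    (h : EuclideanSpace ℝ (Fin n) → ℝ) (hconv : ConvexOn ℝ Set.univ h)
    (J : Fin N → EuclideanSpace ℝ (Fin n) → ℝ)
    (hJ : ∀ i, Differentiable ℝ (J i))
    (Li : Fin N → ℝ)
    (hLip : ∀ i, ∀ a b : EuclideanSpace ℝ (Fin n),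
      ‖gradient (J i) a - gradient (J i) b‖ ≤ Li i * ‖a - b‖)
    (x xp lam : Fin N → EuclideanSpace ℝ (Fin n))
    (x0 x0p : EuclideanSpace ℝ (Fin n))
    (γ : Fin N → ℝ) (hγ : ∀ i, 0 < γ i)
    -- (a) x₀⁺ is a global minimizer of x ↦ L({x̃ᵢ}, x, {λᵢ})
    (hmin : ∀ y, augLag h J ρ x x0p lam ≤ augLag h J ρ x y lam)
    -- (b) each subproblem objective is γᵢ-strongly convex
    (hsc : ∀ i, ∀ a b : EuclideanSpace ℝ (Fin n),
      (J i a + ⟪lam i, a - x0p⟫ + ρ / 2 * ‖a - x0p‖ ^ 2) -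
        (J i b + ⟪lam i, b - x0p⟫ + ρ / 2 * ‖b - x0p‖ ^ 2) ≤
      ⟪gradient (fun z => J i z + ⟪lam i, z - x0p⟫ + ρ / 2 * ‖z - x0p‖ ^ 2) a,
        a - b⟫ - γ i / 2 * ‖a - b‖ ^ 2)
    -- (c) approximate stationarity
    (h1 : ∀ i, ‖gradient (J i) (x i) + lam i‖ ≤ D)
    (h2 : ∀ i, ‖gradient (J i) (xp i) + lam i + ρ • (xp i - x0p)‖ ≤ D)
    (lamp : Fin N → EuclideanSpace ℝ (Fin n))
    (hlamp : ∀ i, lamp i = lam i + ρ • (xp i - x0p)) :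
    augLag h J ρ xp x0p lamp - augLag h J ρ x x0 lam ≤
      (∑ i, (2 * (Li i) ^ 2 / ρ - γ i / 4) * ‖xp i - x i‖ ^ 2)
        - (N * ρ / 2) * ‖x0p - x0‖ ^ 2 + 8 * N * D ^ 2 / ρ + ∑ i, D ^ 2 / γ i := by
  have hcentre : augLag h J ρ x x0p lam + N * ρ / 2 * ‖x0p - x0‖ ^ 2 ≤ augLag h J ρ x x0 lam :=
    strongConvexOn_augLag hconv |>.add_sq_norm_sub_le_of_isMinOn (Set.mem_univ _)
      (Set.mem_univ _) fun y _ => hmin y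
  have hblocks := sum_le_sum fun i (_ : i ∈ univ) =>
    localObjective_step_le (hJ i (xp i)) hρ (hγ i) (hLip i (xp i) (x i)) (hsc i (xp i) (x i))
      (h1 i) (h2 i)
  rw [sum_add_distrib, sum_add_distrib, sum_const, card_univ, Fintype.card_fin,
    nsmul_eq_mul, ← augLag_update_sub (h := h) hlamp] at hblocks
  have hconst : (N : ℝ) * (8 * D ^ 2 / ρ) = 8 * N * D ^ 2 / ρ := by ring
  linarith

/-- paper's Lemma 2: descent of the augmented Lagrangian across one
sensitivity-assisted ADMM iteration. -/
theorem augmented_lagrangian_descent {n N : ℕ} (hN : 1 ≤ N) (ρ : ℝ) (hρ : 0 < ρ)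
    (D : ℝ) (hD : 0 ≤ D)
    (h : EuclideanSpace ℝ (Fin n) → ℝ) (hconv : ConvexOn ℝ Set.univ h)
    (J : Fin N → EuclideanSpace ℝ (Fin n) → ℝ)
    (hJ : ∀ i, Differentiable ℝ (J i))
    (Li : Fin N → ℝ)
    (hLip : ∀ i, ∀ a b : EuclideanSpace ℝ (Fin n),
      ‖gradient (J i) a - gradient (J i) b‖ ≤ Li i * ‖a - b‖)
    (x xp lam : Fin N → EuclideanSpace ℝ (Fin n))
    (x0 x0p : EuclideanSpace ℝ (Fin n))
    (γ : Fin N → ℝ) (hγ : ∀ i, 0 < γ i)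
    -- (a) x₀⁺ is a global minimizer of x ↦ L({x̃ᵢ}, x, {λᵢ})
    (hmin : ∀ y, augLag h J ρ x x0p lam ≤ augLag h J ρ x y lam)
    -- (b) each subproblem objective is γᵢ-strongly convex
    (hsc : ∀ i, ∀ a b : EuclideanSpace ℝ (Fin n),
      (J i a + ⟪lam i, a - x0p⟫ + ρ / 2 * ‖a - x0p‖ ^ 2) -
        (J i b + ⟪lam i, b - x0p⟫ + ρ / 2 * ‖b - x0p‖ ^ 2) ≤
      ⟪gradient (fun z => J i z + ⟪lam i, z - x0p⟫ + ρ / 2 * ‖z - x0p‖ ^ 2) a,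
        a - b⟫ - γ i / 2 * ‖a - b‖ ^ 2)
    -- (c) approximate stationarity
    (h1 : ∀ i, ‖gradient (J i) (x i) + lam i‖ ≤ D)
    (h2 : ∀ i, ‖gradient (J i) (xp i) + lam i + ρ • (xp i - x0p)‖ ≤ D)
    (lamp : Fin N → EuclideanSpace ℝ (Fin n))
    (hlamp : ∀ i, lamp i = lam i + ρ • (xp i - x0p)) :
    augLag h J ρ xp x0p lamp - augLag h J ρ x x0 lam ≤
      (∑ i, (2 * (Li i) ^ 2 / ρ - γ i / 4) * ‖xp i - x i‖ ^ 2)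
        - (N * ρ / 2) * ‖x0p - x0‖ ^ 2 + 8 * N * D ^ 2 / ρ + ∑ i, D ^ 2 / γ i :=
  augmented_lagrangian_descent_general ρ hρ D h hconv J hJ Li hLip x xp lam x0 x0p γ hγ hmin hsc h1
    h2 lamp hlamp
end

section
/- Let N ≥ 1, ρ > 0, D ≥ 0, R ≥ 0, let h : ℝⁿ → ℝ, and for each i = 1,…,N let Jᵢ : ℝⁿ → ℝ be differentiable with Lᵢ-Lipschitz gradient and ρ ≥ Lᵢ. Suppose J_m ∈ ℝ satisfies h(y) + Σᵢ₌₁ᴺ Jᵢ(y) ≥ J_m for all y ∈ ℝⁿ. Let x̃ᵢ, λᵢ, x₀ ∈ ℝⁿ satisfy ‖∇Jᵢ(x̃ᵢ) + λᵢ‖ ≤ D and ‖x̃ᵢ − x₀‖ ≤ R for each i. Then L({x̃ᵢ}, x₀, {λᵢ}) ≥ J_m − N·D·R. -/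
/-!
Each agent's term of the augmented Lagrangian dominates `Jᵢ(x₀) − D R`. Indeed, by the descent
lemma for an `Lᵢ`-smooth function, `Jᵢ(x₀) ≤ Jᵢ(xᵢ) + ⟨∇Jᵢ(xᵢ), x₀ − xᵢ⟩ + (Lᵢ/2)‖xᵢ − x₀‖²`;
writing `∇Jᵢ(xᵢ) = (∇Jᵢ(xᵢ) + λᵢ) − λᵢ`, the first part contributes at most `D R` by Cauchy–Schwarz
and `Lᵢ ≤ ρ` absorbs the quadratic term. Summing over the agents and adding `h(x₀)` gives
`h(x₀) + Σᵢ Jᵢ(x₀) − N D R ≥ J_m − N D R`.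
-/

open RealInnerProductSpace Finset

theorem image_one_le_of_hasDerivAt_le_mul {φ φ' : ℝ → ℝ} {C : ℝ}
    (hφ : ∀ t ∈ Set.Icc (0 : ℝ) 1, HasDerivAt φ (φ' t) t)
    (hφ' : ∀ t ∈ Set.Ico (0 : ℝ) 1, φ' t ≤ C * t) :
    φ 1 ≤ φ 0 + C / 2 := by
  have hB (t : ℝ) : HasDerivAt (fun t ↦ φ 0 + C / 2 * t ^ 2) (C * t) t := by
    refine (((hasDerivAt_pow 2 t).const_mul (C / 2)).const_add (φ 0)).congr_deriv ?_
    push_cast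
    ring
  have := image_le_of_deriv_right_le_deriv_boundary
    (fun t ht ↦ (hφ t ht).continuousAt.continuousWithinAt)
    (fun t ht ↦ (hφ t (Set.Ico_subset_Icc_self ht)).hasDerivWithinAt) (by simp)
    (fun t _ ↦ (hB t).continuousAt.continuousWithinAt) (fun t _ ↦ (hB t).hasDerivWithinAt) hφ'
    (Set.right_mem_Icc.2 zero_le_one)
  simpa using this

section Descent

variable {E : Type*} [NormedAddCommGroup E] [InnerProductSpace ℝ E]

theorem neg_mul_le_inner_of_norm_le {u v : E} {D R : ℝ} (hu : ‖u‖ ≤ D) (hv : ‖v‖ ≤ R) :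
    -(D * R) ≤ ⟪u, v⟫ :=
  calc -(D * R) ≤ -(‖u‖ * ‖v‖) :=
        neg_le_neg (mul_le_mul hu hv (norm_nonneg v) ((norm_nonneg u).trans hu))
    _ ≤ ⟪u, v⟫ := neg_le_of_abs_le (abs_real_inner_le_norm u v)

variable [CompleteSpace E]

theorem hasDerivAt_comp_add_smul_of_differentiableAt {f : E → ℝ} {a v : E} {t : ℝ}
    (hf : DifferentiableAt ℝ f (a + t • v)) :
    HasDerivAt (fun s : ℝ ↦ f (a + s • v)) ⟪gradient f (a + t • v), v⟫ t := by
  have hline : HasDerivAt (fun s : ℝ ↦ a + s • v) v t := by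
    simpa using ((hasDerivAt_id t).smul_const v).const_add a
  simpa [Function.comp_def] using hf.hasGradientAt.hasFDerivAt.comp_hasDerivAt t hline

theorem le_add_inner_gradient_add_of_lipschitz_gradient {f : E → ℝ} (hf : Differentiable ℝ f)
    {L : ℝ} (hL : ∀ a b, ‖gradient f a - gradient f b‖ ≤ L * ‖a - b‖) (a b : E) :
    f b ≤ f a + ⟪gradient f a, b - a⟫ + L / 2 * ‖b - a‖ ^ 2 := by
  set v := b - a
  have hφ (t : ℝ) : HasDerivAt (fun s : ℝ ↦ f (a + s • v) - s * ⟪gradient f a, v⟫)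
      (⟪gradient f (a + t • v), v⟫ - ⟪gradient f a, v⟫) t :=
    (hasDerivAt_comp_add_smul_of_differentiableAt (hf _)).sub
      (by simpa using (hasDerivAt_id t).mul_const ⟪gradient f a, v⟫)
  have hφ' : ∀ t ∈ Set.Ico (0 : ℝ) 1,
      ⟪gradient f (a + t • v), v⟫ - ⟪gradient f a, v⟫ ≤ L * ‖v‖ ^ 2 * t := by
    intro t ht
    calc ⟪gradient f (a + t • v), v⟫ - ⟪gradient f a, v⟫
        = ⟪gradient f (a + t • v) - gradient f a, v⟫ := (inner_sub_left _ _ _).symm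
      _ ≤ ‖gradient f (a + t • v) - gradient f a‖ * ‖v‖ := real_inner_le_norm _ _
      _ ≤ L * ‖t • v‖ * ‖v‖ := by
        gcongr
        simpa using hL (a + t • v) a
      _ = L * ‖v‖ ^ 2 * t := by
        rw [norm_smul, Real.norm_of_nonneg ht.1]; ring
  have := image_one_le_of_hasDerivAt_le_mul (fun t _ ↦ hφ t) hφ'
  simp only [one_smul, one_mul, zero_smul, add_zero, zero_mul, sub_zero, v,
    add_sub_cancel] at this
  linarith

theorem sub_mul_le_add_inner_add_sq_of_lipschitz_gradient {f : E → ℝ} (hf : Differentiable ℝ f)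
    {L ρ : ℝ} (hL : ∀ a b, ‖gradient f a - gradient f b‖ ≤ L * ‖a - b‖) (hLρ : L ≤ ρ)
    {x x₀ μ : E} {D R : ℝ} (hdual : ‖gradient f x + μ‖ ≤ D) (hprim : ‖x - x₀‖ ≤ R) :
    f x₀ - D * R ≤ f x + ⟪μ, x - x₀⟫ + ρ / 2 * ‖x - x₀‖ ^ 2 := by
  have hdescent := le_add_inner_gradient_add_of_lipschitz_gradient hf hL x x₀
  rw [norm_sub_rev] at hdescent
  have hsplit : ⟪gradient f x, x₀ - x⟫ = -⟪gradient f x + μ, x - x₀⟫ + ⟪μ, x - x₀⟫ := by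
    rw [← neg_sub x, inner_neg_right, inner_add_left]
    ring
  have hinner := neg_mul_le_inner_of_norm_le hdual hprim
  have hquad : L / 2 * ‖x - x₀‖ ^ 2 ≤ ρ / 2 * ‖x - x₀‖ ^ 2 := by gcongr
  linarith

end Descent

theorem augLag_eq_add_sum {n N : ℕ} (h : EuclideanSpace ℝ (Fin n) → ℝ)
    (J : Fin N → EuclideanSpace ℝ (Fin n) → ℝ) (ρ : ℝ)
    (x : Fin N → EuclideanSpace ℝ (Fin n)) (x0 : EuclideanSpace ℝ (Fin n))
    (lam : Fin N → EuclideanSpace ℝ (Fin n)) :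
    augLag h J ρ x x0 lam =
      h x0 + ∑ i, (J i (x i) + ⟪lam i, x i - x0⟫ + ρ / 2 * ‖x i - x0‖ ^ 2) := by
  rw [augLag, sum_add_distrib, sum_add_distrib]
  ring

theorem augmented_lagrangian_lower_bound_general {n N : ℕ} (ρ : ℝ)
    (D : ℝ) (R : ℝ)
    (h : EuclideanSpace ℝ (Fin n) → ℝ)
    (J : Fin N → EuclideanSpace ℝ (Fin n) → ℝ)
    (hJ : ∀ i, Differentiable ℝ (J i))
    (Li : Fin N → ℝ)
    (hLip : ∀ i, ∀ a b : EuclideanSpace ℝ (Fin n),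
      ‖gradient (J i) a - gradient (J i) b‖ ≤ Li i * ‖a - b‖)
    (hρL : ∀ i, Li i ≤ ρ)
    (Jm : ℝ) (hJm : ∀ y : EuclideanSpace ℝ (Fin n), Jm ≤ h y + ∑ i, J i y)
    (x lam : Fin N → EuclideanSpace ℝ (Fin n)) (x0 : EuclideanSpace ℝ (Fin n))
    (hdual : ∀ i, ‖gradient (J i) (x i) + lam i‖ ≤ D)
    (hprim : ∀ i, ‖x i - x0‖ ≤ R) :
    Jm - N * D * R ≤ augLag h J ρ x x0 lam := by
  calc Jm - N * D * R ≤ h x0 + ∑ i, (J i x0 - D * R) := by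
        have := hJm x0
        rw [sum_sub_distrib, sum_const, card_univ, Fintype.card_fin, nsmul_eq_mul]
        linarith
    _ ≤ h x0 + ∑ i, (J i (x i) + ⟪lam i, x i - x0⟫ + ρ / 2 * ‖x i - x0‖ ^ 2) := by
        gcongr with i
        exact sub_mul_le_add_inner_add_sq_of_lipschitz_gradient (hJ i) (hLip i) (hρL i)
          (hdual i) (hprim i)
    _ = augLag h J ρ x x0 lam := (augLag_eq_add_sum h J ρ x x0 lam).symm

/-- lower bound in the proof of the paper's Lemma 3: the augmented
Lagrangian is bounded below by `J_m − N·D·R` under approximate dual feasibility and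
small primal residual. -/
theorem augmented_lagrangian_lower_bound {n N : ℕ} (hN : 1 ≤ N) (ρ : ℝ) (hρ : 0 < ρ)
    (D : ℝ) (hD : 0 ≤ D) (R : ℝ) (hR : 0 ≤ R)
    (h : EuclideanSpace ℝ (Fin n) → ℝ)
    (J : Fin N → EuclideanSpace ℝ (Fin n) → ℝ)
    (hJ : ∀ i, Differentiable ℝ (J i))
    (Li : Fin N → ℝ)
    (hLip : ∀ i, ∀ a b : EuclideanSpace ℝ (Fin n),
      ‖gradient (J i) a - gradient (J i) b‖ ≤ Li i * ‖a - b‖)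
    (hρL : ∀ i, Li i ≤ ρ)
    (Jm : ℝ) (hJm : ∀ y : EuclideanSpace ℝ (Fin n), Jm ≤ h y + ∑ i, J i y)
    (x lam : Fin N → EuclideanSpace ℝ (Fin n)) (x0 : EuclideanSpace ℝ (Fin n))
    (hdual : ∀ i, ‖gradient (J i) (x i) + lam i‖ ≤ D)
    (hprim : ∀ i, ‖x i - x0‖ ≤ R) :
    Jm - N * D * R ≤ augLag h J ρ x x0 lam :=
  augmented_lagrangian_lower_bound_general ρ D R h J hJ Li hLip hρL Jm hJm x lam x0 hdual hprim
end
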